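/- Under the pointwise injectivity assumption that a ↦ Π_x^a is injective for m^π-almost every x, any Bayes rule in the prior disclosure game with strictly proper score S must satisfy δ(x) = π for m^π-almost every x; i.e., the truth-telling rule is the essentially unique Bayes rule. -/

import Mathlib

open Finset

/-- `p` is a probability mass function on the finite set `Ω`. -/
def IsPMF {Ω : Type*} [Fintype Ω] (p : Ω → ℝ) : Prop :=
  (∀ a, 0 ≤ p a) ∧ ∑ a, p a = 1

/-- A scoring rule `S` on pmfs over `Ω` is strictly proper. -/
def StrictlyProper {Ω : Type*} [Fintype Ω] (S : (Ω → ℝ) → Ω → ℝ) : Prop :=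
  ∀ p q : Ω → ℝ, IsPMF p → IsPMF q →
    (∑ y, p y * S q y ≤ ∑ y, p y * S p y) ∧
    ((∑ y, p y * S q y = ∑ y, p y * S p y) → q = p)

/-- Prior predictive (marginal) distribution of the data. -/
noncomputable def priorPred {Ω 𝒳 : Type*} [Fintype Ω]
    (P : Ω → 𝒳 → ℝ) (π : Ω → ℝ) (x : 𝒳) : ℝ :=
  ∑ θ, π θ * P θ x

/-- Posterior distribution over `Ω` given `X = x`, under prior `a`. -/
noncomputable def post {Ω 𝒳 : Type*} [Fintype Ω]
    (P : Ω → 𝒳 → ℝ) (a : Ω → ℝ) (x : 𝒳) (θ : Ω) : ℝ :=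
  a θ * P θ x / priorPred P a x

/-- Frequentist risk of decision rule `δ` at `θ` in the prior disclosure game. -/
noncomputable def freqRisk {Ω 𝒳 : Type*} [Fintype Ω] [Fintype 𝒳]
    (S : (Ω → ℝ) → Ω → ℝ) (P : Ω → 𝒳 → ℝ) (δ : 𝒳 → Ω → ℝ) (θ : Ω) : ℝ :=
  ∑ x, P θ x * (-(S (post P (δ x) x) θ))

/-- Bayes risk of decision rule `δ` under prior `π` in the prior disclosure game. -/
noncomputable def bayesRisk {Ω 𝒳 : Type*} [Fintype Ω] [Fintype 𝒳]
    (S : (Ω → ℝ) → Ω → ℝ) (P : Ω → 𝒳 → ℝ) (δ : 𝒳 → Ω → ℝ) (π : Ω → ℝ) : ℝ :=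
  ∑ θ, π θ * freqRisk S P δ θ

/-- Minimum Bayes risk over all (pmf-valued) decision rules. -/
noncomputable def minBayesRisk {Ω 𝒳 : Type*} [Fintype Ω] [Fintype 𝒳]
    (S : (Ω → ℝ) → Ω → ℝ) (P : Ω → 𝒳 → ℝ) (π : Ω → ℝ) : ℝ :=
  sInf {r | ∃ δ : 𝒳 → Ω → ℝ, (∀ x, IsPMF (δ x)) ∧ r = bayesRisk S P δ π}

/-- Generalized entropy associated with the scoring rule `S`. -/
noncomputable def genEntropy {Ω : Type*} [Fintype Ω]
    (S : (Ω → ℝ) → Ω → ℝ) (p : Ω → ℝ) : ℝ :=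
  -∑ y, p y * S p y

/-- Score divergence associated with the scoring rule `S`. -/
noncomputable def scoreDiv {Ω : Type*} [Fintype Ω]
    (S : (Ω → ℝ) → Ω → ℝ) (p q : Ω → ℝ) : ℝ :=
  ∑ y, p y * (S p y - S q y)

/-! Conditioning on `X = x`, the Bayes risk of `δ` exceeds that of truth-telling by
`∑ₓ m^π(x) · D(Π_x^π, Π_x^{δ(x)})`, where `D` is the score divergence. Strict propriety makes every
term nonnegative and zero only when the two posteriors agree, so a Bayes rule reports the true
posterior wherever `m^π(x) > 0`, and injectivity of `a ↦ Π_x^a` recovers `δ(x) = π`. -/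

section ScoringRule

variable {Ω : Type*} [Fintype Ω]

lemma scoreDiv_eq_sub (S : (Ω → ℝ) → Ω → ℝ) (p q : Ω → ℝ) :
    scoreDiv S p q = ∑ y, p y * S p y - ∑ y, p y * S q y := by
  simp only [scoreDiv, mul_sub, sum_sub_distrib]

variable {S : (Ω → ℝ) → Ω → ℝ} {p q : Ω → ℝ}

lemma StrictlyProper.scoreDiv_nonneg (hS : StrictlyProper S) (hp : IsPMF p) (hq : IsPMF q) :
    0 ≤ scoreDiv S p q := by
  rw [scoreDiv_eq_sub]
  exact sub_nonneg.mpr (hS p q hp hq).1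

lemma StrictlyProper.eq_of_scoreDiv_eq_zero (hS : StrictlyProper S) (hp : IsPMF p)
    (hq : IsPMF q) (h : scoreDiv S p q = 0) : q = p := by
  rw [scoreDiv_eq_sub, sub_eq_zero] at h
  exact (hS p q hp hq).2 h.symm

end ScoringRule

section Posterior

variable {Ω 𝒳 : Type*} [Fintype Ω] {P : Ω → 𝒳 → ℝ} {a : Ω → ℝ}

lemma IsPMF.exists_pos (ha : IsPMF a) : ∃ θ, 0 < a θ := by
  by_contra! h
  have h0 : ∑ θ, a θ = 0 := sum_eq_zero fun θ _ => le_antisymm (h θ) (ha.1 θ)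
  rw [ha.2] at h0
  exact one_ne_zero h0

lemma priorPred_pos (ha : IsPMF a) (hPpos : ∀ θ x, 0 < P θ x) (x : 𝒳) :
    0 < priorPred P a x := by
  obtain ⟨θ, hθ⟩ := ha.exists_pos
  exact sum_pos' (fun θ _ => mul_nonneg (ha.1 θ) (hPpos θ x).le)
    ⟨θ, mem_univ θ, mul_pos hθ (hPpos θ x)⟩

lemma isPMF_post (ha : IsPMF a) (hPpos : ∀ θ x, 0 < P θ x) (x : 𝒳) :
    IsPMF (post P a x) := by
  have hm := priorPred_pos ha hPpos x
  refine ⟨fun θ => div_nonneg (mul_nonneg (ha.1 θ) (hPpos θ x).le) hm.le, ?_⟩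
  simp only [post]
  rw [← sum_div, div_eq_one_iff_eq hm.ne']
  rfl

lemma mul_eq_priorPred_mul_post (x : 𝒳) (θ : Ω) (hm : priorPred P a x ≠ 0) :
    a θ * P θ x = priorPred P a x * post P a x θ := by
  rw [post, mul_div_cancel₀ _ hm]

end Posterior

section BayesRisk

variable {Ω 𝒳 : Type*} [Fintype Ω] [Fintype 𝒳]
  {S : (Ω → ℝ) → Ω → ℝ} {P : Ω → 𝒳 → ℝ} {π : Ω → ℝ}

lemma bayesRisk_eq_sum_priorPred_mul (hm : ∀ x, priorPred P π x ≠ 0) (δ : 𝒳 → Ω → ℝ) :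
    bayesRisk S P δ π =
      ∑ x, priorPred P π x * ∑ θ, post P π x θ * -S (post P (δ x) x) θ := by
  simp only [bayesRisk, freqRisk, mul_sum]
  rw [sum_comm]
  refine sum_congr rfl fun x _ => sum_congr rfl fun θ _ => ?_
  rw [← mul_assoc, ← mul_assoc, mul_eq_priorPred_mul_post x θ (hm x)]

lemma bayesRisk_sub_bayesRisk_truth (hm : ∀ x, priorPred P π x ≠ 0) (δ : 𝒳 → Ω → ℝ) :
    bayesRisk S P δ π - bayesRisk S P (fun _ => π) π =
      ∑ x, priorPred P π x * scoreDiv S (post P π x) (post P (δ x) x) := by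
  rw [bayesRisk_eq_sum_priorPred_mul hm, bayesRisk_eq_sum_priorPred_mul hm, ← sum_sub_distrib]
  refine sum_congr rfl fun x _ => ?_
  rw [← mul_sub, scoreDiv_eq_sub]
  simp only [mul_neg, sum_neg_distrib]
  ring

end BayesRisk

theorem truth_telling_unique_general
    {Ω 𝒳 : Type*} [Fintype Ω] [Fintype 𝒳]
    (S : (Ω → ℝ) → Ω → ℝ) (hS : StrictlyProper S)
    (P : Ω → 𝒳 → ℝ) (hPpos : ∀ θ x, 0 < P θ x)
    (π : Ω → ℝ) (hπ : IsPMF π)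
    (hinj : ∀ x : 𝒳, 0 < priorPred P π x →
      Set.InjOn (fun a : Ω → ℝ => post P a x) {a | IsPMF a})
    (δ : 𝒳 → Ω → ℝ) (hδ : ∀ x, IsPMF (δ x))
    (hBayes : ∀ δ' : 𝒳 → Ω → ℝ, (∀ x, IsPMF (δ' x)) →
      bayesRisk S P δ π ≤ bayesRisk S P δ' π) :
    ∀ x : 𝒳, 0 < priorPred P π x → δ x = π := by
  intro x hx
  have hm : ∀ y, 0 < priorPred P π y := priorPred_pos hπ hPpos
  have hterm_nonneg : ∀ y ∈ univ,
      0 ≤ priorPred P π y * scoreDiv S (post P π y) (post P (δ y) y) := fun y _ =>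
    mul_nonneg (hm y).le
      (hS.scoreDiv_nonneg (isPMF_post hπ hPpos y) (isPMF_post (hδ y) hPpos y))
  have hregret : ∑ y, priorPred P π y * scoreDiv S (post P π y) (post P (δ y) y) = 0 := by
    refine le_antisymm ?_ (sum_nonneg hterm_nonneg)
    rw [← bayesRisk_sub_bayesRisk_truth fun y => (hm y).ne']
    exact sub_nonpos.mpr (hBayes _ fun _ => hπ)
  have hterm : priorPred P π x * scoreDiv S (post P π x) (post P (δ x) x) = 0 :=
    (sum_eq_zero_iff_of_nonneg hterm_nonneg).mp hregret x (mem_univ x)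
  have hdiv : scoreDiv S (post P π x) (post P (δ x) x) = 0 :=
    (mul_eq_zero.mp hterm).resolve_left hx.ne'
  exact hinj x hx (hδ x) hπ
    (hS.eq_of_scoreDiv_eq_zero (isPMF_post hπ hPpos x) (isPMF_post (hδ x) hPpos x) hdiv)

/-- Under the pointwise injectivity assumption that `a ↦ Π_x^a` is injective for
`m^π`-almost every `x`, any Bayes rule in the prior disclosure game with strictly proper score
`S` satisfies `δ(x) = π` for `m^π`-almost every `x`: truth-telling is the essentially unique
Bayes rule. -/
theorem truth_telling_unique
    {Ω 𝒳 : Type*} [Fintype Ω] [Fintype 𝒳]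
    (S : (Ω → ℝ) → Ω → ℝ) (hS : StrictlyProper S)
    (P : Ω → 𝒳 → ℝ) (hP : ∀ θ, IsPMF (P θ)) (hPpos : ∀ θ x, 0 < P θ x)
    (π : Ω → ℝ) (hπ : IsPMF π)
    (hinj : ∀ x : 𝒳, 0 < priorPred P π x →
      Set.InjOn (fun a : Ω → ℝ => post P a x) {a | IsPMF a})
    (δ : 𝒳 → Ω → ℝ) (hδ : ∀ x, IsPMF (δ x))
    (hBayes : ∀ δ' : 𝒳 → Ω → ℝ, (∀ x, IsPMF (δ' x)) →
      bayesRisk S P δ π ≤ bayesRisk S P δ' π) :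
    ∀ x : 𝒳, 0 < priorPred P π x → δ x = π :=
  truth_telling_unique_general S hS P hPpos π hπ hinj δ hδ hBayes
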